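/- The sequence EL_{n,2,1}^B for the 1-reach Bernoulli matching model with k = 2, defined by the generating-function-derived closed recurrence, satisfies EL_{n,2,1}^B = (8/11)n − (32/121) + ρ_n, where |ρ_n| ≤ C·n·2^{−2n} for some constant C; in particular lim EL_{n,2,1}^B/n = 8/11. -/

import Mathlib

/-! `M + N` has eigenvalues `1`, `1/2` and `λ, λ̄ = (3 ± i√7)/16`, with `|λ| = 1/4`. Solving the
recurrences explicitly, `H_n(1)` is a combination of `1` and `λⁿ, λ̄ⁿ`, and `H_n'(1)` of `1, n`
and `λⁿ, nλⁿ, λ̄ⁿ, nλ̄ⁿ` (the `1/2`-modes cancel from the start since `H₁` is symmetric in the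
two middle coordinates). Summing, the `nλⁿ` terms cancel as well, so
`EL_{n+1} = (8/11)(n+1) - 32/121 + O(4⁻ⁿ)`. -/

open Filter Finset

/-- The matrix `M` of the 1-reach Bernoulli matching model for `k = 2`. -/
noncomputable def MB : Matrix (Fin 4) (Fin 4) ℝ :=
  !![1/8, 0, 0, 0; 1/4, 0, 0, 0; 1/4, 0, 0, 0; 1/2, 0, 0, 0]

/-- The matrix `N` of the 1-reach Bernoulli matching model for `k = 2`. -/
noncomputable def NB : Matrix (Fin 4) (Fin 4) ℝ :=
  !![1/4, 1/4, 1/4, 1/8; 0, 1/2, 0, 1/4; 0, 0, 1/2, 1/4; 0, 0, 0, 1/2]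

/-- `HB n = H_{n+1}(1)`, the section probability vector:
`H₁(1) = (1/2, 0, 0, 1/2)` and `H_{n+1}(1) = H_n(1) (M + N)`. -/
noncomputable def HB : ℕ → Fin 4 → ℝ
  | 0 => ![1/2, 0, 0, 1/2]
  | n + 1 => Matrix.vecMul (HB n) (MB + NB)

/-- `EB n = d/db H_{n+1}(b) |_{b=1}`, the expected-value vector:
`H₁'(1) = (0, 0, 0, 1/2)` (from `H₁(b) = (1/2, 0, 0, b/2)`), with the
product rule `H_{n+1}'(1) = H_n'(1)(M + N) + H_n(1) N`
(since `T(b) = M + bN`). -/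
noncomputable def EB : ℕ → Fin 4 → ℝ
  | 0 => ![0, 0, 0, 1/2]
  | n + 1 => Matrix.vecMul (EB n) (MB + NB) + Matrix.vecMul (HB n) NB

/-- `EL_{n,2,1}^B = Σ_i (EB (n-1))_i`. -/
noncomputable def ELB (n : ℕ) : ℝ := ∑ i : Fin 4, EB (n - 1) i

open Matrix

/-- `(eigenCoords n).1 + i√7 (eigenCoords n).2 = λⁿ` for `λ = (3 + i√7)/16`. -/
noncomputable def eigenCoords : ℕ → ℝ × ℝ
  | 0 => (1, 0)
  | n + 1 => ((3 * (eigenCoords n).1 - 7 * (eigenCoords n).2) / 16,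
      ((eigenCoords n).1 + 3 * (eigenCoords n).2) / 16)

lemma eigenCoords_normSq (n : ℕ) :
    (eigenCoords n).1 ^ 2 + 7 * (eigenCoords n).2 ^ 2 = (1 / 16 : ℝ) ^ n := by
  induction n with
  | zero => simp [eigenCoords]
  | succ n ih => rw [pow_succ (1 / 16 : ℝ), ← ih, eigenCoords]; ring

lemma abs_le_of_sq_add_mul_sq_eq {a b c r : ℝ} (hc : 1 ≤ c) (hr : 0 ≤ r)
    (h : a ^ 2 + c * b ^ 2 = r ^ 2) : |a| ≤ r ∧ |b| ≤ r := by
  have hb : 0 ≤ b ^ 2 := sq_nonneg b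
  exact ⟨abs_le_of_sq_le_sq (by nlinarith) hr, abs_le_of_sq_le_sq (by nlinarith) hr⟩

lemma abs_eigenCoords_le (n : ℕ) :
    |(eigenCoords n).1| ≤ (1 / 4 : ℝ) ^ n ∧ |(eigenCoords n).2| ≤ (1 / 4 : ℝ) ^ n := by
  refine abs_le_of_sq_add_mul_sq_eq (c := 7) (by norm_num) (by positivity) ?_
  rw [eigenCoords_normSq, ← pow_mul, mul_comm, pow_mul]
  norm_num

lemma vecMul_MB_add_NB (v : Fin 4 → ℝ) :
    vecMul v (MB + NB) = ![3/8 * v 0 + 1/4 * v 1 + 1/4 * v 2 + 1/2 * v 3,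
      1/4 * v 0 + 1/2 * v 1, 1/4 * v 0 + 1/2 * v 2,
      1/8 * v 0 + 1/4 * v 1 + 1/4 * v 2 + 1/2 * v 3] := by
  ext j
  fin_cases j <;>
    simp only [vecMul, dotProduct, Fin.sum_univ_four, MB, NB, Matrix.add_apply, of_apply,
      Fin.isValue, Fin.zero_eta, Fin.mk_one, Fin.reduceFinMk, cons_val', cons_val_zero,
      cons_val_one, Matrix.cons_val, cons_val_fin_one] <;> ring

lemma vecMul_NB (v : Fin 4 → ℝ) :
    vecMul v NB = ![1/4 * v 0, 1/4 * v 0 + 1/2 * v 1, 1/4 * v 0 + 1/2 * v 2,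
      1/8 * v 0 + 1/4 * v 1 + 1/4 * v 2 + 1/2 * v 3] := by
  ext j
  fin_cases j <;>
    simp only [vecMul, dotProduct, Fin.sum_univ_four, NB, of_apply,
      Fin.isValue, Fin.zero_eta, Fin.mk_one, Fin.reduceFinMk, cons_val', cons_val_zero,
      cons_val_one, Matrix.cons_val, cons_val_fin_one] <;> ring

lemma HB_eq (n : ℕ) :
    let p := (eigenCoords n).1
    let q := (eigenCoords n).2
    HB n = ![4/11 + 3/22 * p + 17/22 * q, 2/11 - 2/11 * p - 4/11 * q,
      2/11 - 2/11 * p - 4/11 * q, 3/11 + 5/22 * p - 1/22 * q] := by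
  induction n with
  | zero => ext j; fin_cases j <;> norm_num [HB, eigenCoords]
  | succ n ih =>
    rw [HB, ih, vecMul_MB_add_NB]
    ext j; fin_cases j <;>
      simp only [eigenCoords, Fin.isValue, Fin.zero_eta, Fin.mk_one, Fin.reduceFinMk,
        cons_val_zero, cons_val_one, Matrix.cons_val] <;> ring

lemma EB_eq (n : ℕ) :
    let p := (eigenCoords n).1
    let q := (eigenCoords n).2
    EB n = ![8/1331 + 32/121 * n - 8/1331 * p + 4640/9317 * q + 59/847 * n * p
        + 119/121 * n * q,
      136/1331 + 16/121 * n - 136/1331 * p - 3642/9317 * q - 141/847 * n * p - 67/121 * n * q,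
      136/1331 + 16/121 * n - 136/1331 * p - 3642/9317 * q - 141/847 * n * p - 67/121 * n * q,
      336/1331 + 24/121 * n + 659/2662 * p + 2439/18634 * q + 223/847 * n * p
        + 15/121 * n * q] := by
  induction n with
  | zero => ext j; fin_cases j <;> norm_num [EB, eigenCoords]
  | succ n ih =>
    rw [EB, ih, HB_eq, vecMul_MB_add_NB, vecMul_NB]
    ext j; fin_cases j <;>
      simp only [eigenCoords, Pi.add_apply, Nat.cast_succ, Fin.isValue, Fin.zero_eta,
        Fin.mk_one, Fin.reduceFinMk, cons_val_zero, cons_val_one, Matrix.cons_val] <;> ring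

lemma ELB_succ_eq (n : ℕ) :
    ELB (n + 1) = 8/11 * (n + 1) - 32/121
      + (9 * (eigenCoords n).1 - 37 * (eigenCoords n).2) / 242 := by
  rw [ELB, Nat.add_sub_cancel, EB_eq, Fin.sum_univ_four]
  simp only [Fin.isValue, cons_val_zero, cons_val_one, Matrix.cons_val]
  ring

lemma abs_ELB_sub_le {n : ℕ} (hn : 1 ≤ n) :
    |ELB n - (8/11 * n - 32/121)| ≤ (1/4 : ℝ) ^ n := by
  obtain ⟨m, rfl⟩ := Nat.exists_eq_add_of_le' hn
  obtain ⟨hp, hq⟩ := abs_eigenCoords_le m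
  have hsub : ELB (m + 1) - (8/11 * ↑(m + 1) - 32/121)
      = (9 * (eigenCoords m).1 - 37 * (eigenCoords m).2) / 242 := by
    rw [ELB_succ_eq]; push_cast; ring
  rw [hsub, abs_div, abs_of_pos (by norm_num : (0 : ℝ) < 242), div_le_iff₀ (by norm_num)]
  calc |9 * (eigenCoords m).1 - 37 * (eigenCoords m).2|
      ≤ 9 * |(eigenCoords m).1| + 37 * |(eigenCoords m).2| := by
        simpa only [abs_mul, abs_of_pos (by norm_num : (0 : ℝ) < 9),
          abs_of_pos (by norm_num : (0 : ℝ) < 37)] using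
          abs_sub (9 * (eigenCoords m).1) (37 * (eigenCoords m).2)
    _ ≤ 46 * (1/4) ^ m := by linarith
    _ ≤ (1/4) ^ (m + 1) * 242 := by
        rw [pow_succ]; nlinarith [pow_nonneg (by norm_num : (0 : ℝ) ≤ 1/4) m]

/-- `EL_{n,2,1}^B = (8/11) n - 32/121 + ρ_n` with `|ρ_n| ≤ C n 2^{-2n}`;
in particular `EL_{n,2,1}^B / n → 8/11`. -/
theorem EL_n21B_asymptotics :
    (∃ C : ℝ, ∀ n : ℕ, 1 ≤ n →
      |ELB n - ((8 / 11) * n - 32 / 121)| ≤ C * n * ((2 : ℝ) ^ (2 * n))⁻¹) ∧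
    Tendsto (fun n : ℕ => ELB n / n) atTop (nhds (8 / 11)) := by
  have hquarter (n : ℕ) : ((2 : ℝ) ^ (2 * n))⁻¹ = (1/4) ^ n := by
    rw [pow_mul, ← inv_pow]; norm_num
  refine ⟨⟨1, fun n hn => ?_⟩, ?_⟩
  · calc |ELB n - (8/11 * n - 32/121)| ≤ (1/4) ^ n := abs_ELB_sub_le hn
      _ ≤ 1 * n * ((2 : ℝ) ^ (2 * n))⁻¹ := by
        rw [hquarter, one_mul]
        exact le_mul_of_one_le_left (by positivity) (by exact_mod_cast hn)
  · set ρ : ℕ → ℝ := fun n => ELB n - (8/11 * n - 32/121)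
    have hρ : Tendsto ρ atTop (nhds 0) :=
      squeeze_zero_norm' (eventually_ge_atTop 1 |>.mono fun n hn => abs_ELB_sub_le hn)
        (tendsto_pow_atTop_nhds_zero_of_lt_one (by norm_num) (by norm_num))
    have hinv : Tendsto (fun n : ℕ => (n : ℝ)⁻¹) atTop (nhds 0) :=
      tendsto_inv_atTop_nhds_zero_nat
    have hlim := ((tendsto_const_nhds (x := (8/11 : ℝ))).sub (hinv.const_mul (32/121))).add
      (hρ.mul hinv)
    rw [mul_zero, mul_zero, sub_zero, add_zero] at hlim
    refine hlim.congr' (eventually_ne_atTop 0 |>.mono fun n hn => ?_)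
    field_simp
    ring
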